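/- Let n ≥ 2, let c ∈ ℝ, let h be a real symmetric n×n matrix, set H = trace(h) and T = h - (H/n)·I. Define R_{ikjl} = c(δ_{ij}δ_{kl} - δ_{il}δ_{jk}) + h_{ij}h_{kl} - h_{il}h_{jk} and Ric_{kl} = ∑_i R_{ikil}. Then -∑_{i,k,j,l} R_{ikjl} T_{ij} T_{kl} + ∑_{i,j,k} Ric_{jk} T_{ij} T_{ik} ≥ ‖T‖² · ( (1/n)·H² - ‖T‖² - ((n-2)/√(n(n-1)))·|H|·‖T‖ + n·c ), where ‖T‖ = √(trace(T²)) is the Frobenius norm. -/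

import Mathlib

/-!
Write `h = T + (H / n) • 1`. Substituting the Gauss equation, every term containing `trace T`
vanishes and the `trace T⁴` terms of the two contractions cancel, leaving the identity
`LHS = n c ‖T‖² + (H² / n) ‖T‖² - ‖T‖⁴ + H · trace T³`. It remains to bound `H · trace T³` from
below by Okumura's inequality, applied to the eigenvalues of `T`, which sum to zero. For a
zero-sum vector `x`, Cauchy–Schwarz gives `xᵢ ≤ M := √((n - 1)/n) ‖x‖`, and summing
`(xᵢ - M) ((n - 1) xᵢ + M)² ≤ 0` over `i` yields `∑ xᵢ³ ≤ (n - 2) / √(n (n - 1)) · ‖x‖³`.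
-/

open Finset Matrix

section Contraction
variable {ι α : Type*} [Fintype ι] [CommRing α]

-- The Gauss equation reads `R = c • wedgeTensor 1 1 + wedgeTensor h h`.
def wedgeTensor (A B : Matrix ι ι α) (i k j l : ι) : α := A i j * B k l - A i l * B j k

theorem sum_wedgeTensor_mul_mul (A B T : Matrix ι ι α) :
    ∑ i, ∑ k, ∑ j, ∑ l, wedgeTensor A B i k j l * T i j * T k l =
      (A * Tᵀ).trace * (B * Tᵀ).trace - (T * B * T * Aᵀ).trace := by
  have hprod : ∑ i, ∑ k, ∑ j, ∑ l, A i j * B k l * T i j * T k l =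
      (A * Tᵀ).trace * (B * Tᵀ).trace := by
    simp only [trace, Matrix.diag, mul_apply, transpose_apply, sum_mul_sum]
    exact sum_congr rfl fun i _ => sum_congr rfl fun k _ => sum_congr rfl fun j _ =>
      sum_congr rfl fun l _ => by ring
  have hcycle : ∑ i, ∑ k, ∑ j, ∑ l, A i l * B j k * T i j * T k l =
      (T * B * T * Aᵀ).trace := by
    simp only [trace, Matrix.diag, mul_apply, transpose_apply, sum_mul]
    refine sum_congr rfl fun i _ => ?_
    refine (sum_congr rfl fun k _ => sum_comm).trans ?_
    rw [sum_comm]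
    exact sum_congr rfl fun l _ => sum_congr rfl fun k _ => sum_congr rfl fun j _ => by ring
  simp only [wedgeTensor, sub_mul, sum_sub_distrib, hprod, hcycle]

theorem sum_wedgeTensor_contract (A B : Matrix ι ι α) (k l : ι) :
    ∑ i, wedgeTensor A B i k i l = (A.trace • B - Bᵀ * A) k l := by
  simp only [wedgeTensor, sum_sub_distrib, ← sum_mul, trace, Matrix.diag, Matrix.sub_apply,
    Matrix.smul_apply, smul_eq_mul, mul_apply, transpose_apply]
  congr 1
  exact sum_congr rfl fun i _ => mul_comm _ _

theorem sum_mul_mul_eq_trace_mul_mul_transpose (A B : Matrix ι ι α) :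
    ∑ i, ∑ j, ∑ k, A j k * B i j * B i k = (B * A * Bᵀ).trace := by
  simp only [trace, Matrix.diag, mul_apply, transpose_apply, sum_mul]
  refine sum_congr rfl fun i _ => ?_
  rw [sum_comm]
  exact sum_congr rfl fun j _ => sum_congr rfl fun k _ => by ring

variable [DecidableEq ι]

theorem gauss_curvature_quadratic_form_eq (c e : α) {T : Matrix ι ι α} (hT : Tᵀ = T)
    (htr : T.trace = 0) (R : ι → ι → ι → ι → α)
    (hR : ∀ i k j l, R i k j l =
      c * wedgeTensor 1 1 i k j l + wedgeTensor (T + e • 1) (T + e • 1) i k j l) :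
    -(∑ i, ∑ k, ∑ j, ∑ l, R i k j l * T i j * T k l) +
        ∑ i, ∑ j, ∑ k, (∑ m, R m j m k) * T i j * T i k =
      Fintype.card ι * (c + e ^ 2) * (T * T).trace - (T * T).trace ^ 2 +
        Fintype.card ι * e * (T * T * T).trace := by
  set h := T + e • 1 with hh
  have hquad : ∑ i, ∑ k, ∑ j, ∑ l, R i k j l * T i j * T k l =
      c * ∑ i, ∑ k, ∑ j, ∑ l, wedgeTensor 1 1 i k j l * T i j * T k l +
        ∑ i, ∑ k, ∑ j, ∑ l, wedgeTensor h h i k j l * T i j * T k l := by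
    simp only [hR, add_mul, sum_add_distrib, mul_sum, mul_assoc]
  have hric : ∀ j k, ∑ m, R m j m k = (c • ((1 : Matrix ι ι α).trace • 1 - 1ᵀ * 1) +
      (h.trace • h - hᵀ * h) : Matrix ι ι α) j k := by
    intro j k
    simp only [hR, sum_add_distrib, ← mul_sum, sum_wedgeTensor_contract, Matrix.add_apply,
      Matrix.smul_apply, smul_eq_mul]
  simp only [hquad, hric, sum_wedgeTensor_mul_mul, sum_mul_mul_eq_trace_mul_mul_transpose]
  simp only [hh, hT, transpose_add, transpose_smul, transpose_one, Matrix.mul_add, Matrix.add_mul,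
    Matrix.smul_mul, Matrix.mul_smul, Matrix.one_mul, Matrix.mul_one, Matrix.mul_sub,
    Matrix.sub_mul, trace_add, trace_sub, trace_smul, trace_one, smul_eq_mul, Matrix.mul_assoc, htr]
  ring

end Contraction

theorem Matrix.IsHermitian.trace_pow_eq_sum_eigenvalues_pow {ι 𝕜 : Type*} [Fintype ι]
    [DecidableEq ι] [RCLike 𝕜] {A : Matrix ι ι 𝕜} (hA : A.IsHermitian) (k : ℕ) :
    (A ^ k).trace = ∑ i, (hA.eigenvalues i : 𝕜) ^ k := by
  conv_lhs => rw [hA.spectral_theorem, ← map_pow, Unitary.conjStarAlgAut_apply, trace_mul_cycle,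
    Unitary.coe_star_mul_self, Matrix.one_mul, diagonal_pow, trace_diagonal]
  rfl

section Okumura

noncomputable def okumuraConstant (n : ℕ) : ℝ := (n - 2) / √(n * (n - 1))

variable {ι : Type*} [Fintype ι]

theorem card_mul_sq_le_of_sum_eq_zero {x : ι → ℝ} (hx : ∑ i, x i = 0) (i : ι) :
    Fintype.card ι * x i ^ 2 ≤ (Fintype.card ι - 1) * ∑ j, x j ^ 2 := by
  classical
  have hrest : ∑ j ∈ univ.erase i, x j = -x i := by
    rw [sum_erase_eq_sub (mem_univ i), hx, zero_sub]
  have hrest_sq : ∑ j ∈ univ.erase i, x j ^ 2 = ∑ j, x j ^ 2 - x i ^ 2 :=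
    sum_erase_eq_sub (mem_univ i)
  have hcs := sq_sum_le_card_mul_sum_sq (s := univ.erase i) (f := x)
  rw [hrest, hrest_sq, card_erase_of_mem (mem_univ i), card_univ,
    Nat.cast_sub (Fintype.card_pos_iff.2 ⟨i⟩), Nat.cast_one] at hcs
  nlinarith

theorem sum_pow_three_le_of_sum_eq_zero (hn : 2 ≤ Fintype.card ι) {x : ι → ℝ}
    (hx : ∑ i, x i = 0) :
    ∑ i, x i ^ 3 ≤ okumuraConstant (Fintype.card ι) *
      ((∑ i, x i ^ 2) * √(∑ i, x i ^ 2)) := by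
  set n : ℝ := (Fintype.card ι : ℝ) with hn_def
  set t := ∑ i, x i ^ 2
  have hn2 : (2 : ℝ) ≤ n := by rw [hn_def]; exact_mod_cast hn
  have ht : 0 ≤ t := sum_nonneg fun i _ => sq_nonneg _
  have hMsq_nonneg : 0 ≤ (n - 1) * t / n :=
    div_nonneg (mul_nonneg (by linarith) ht) (by linarith)
  set M := √((n - 1) * t / n)
  have hM : n * M ^ 2 = (n - 1) * t := by
    rw [Real.sq_sqrt hMsq_nonneg]
    field_simp
  have hx_le : ∀ i, x i ≤ M := fun i =>
    (le_abs_self _).trans <| Real.abs_le_sqrt <| by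
      rw [le_div_iff₀ (by positivity)]
      linarith [card_mul_sq_le_of_sum_eq_zero hx i]
  have hsum : (n - 1) ^ 2 * ∑ i, x i ^ 3 ≤ (n - 1) * (n - 2) * M * t := by
    have hpt : ∀ i, (n - 1) ^ 2 * x i ^ 3 ≤
        (n - 1) * (n - 3) * M * x i ^ 2 + (2 * n - 3) * M ^ 2 * x i + M ^ 3 := fun i => by
      nlinarith [mul_nonpos_of_nonpos_of_nonneg (sub_nonpos.2 (hx_le i))
        (sq_nonneg ((n - 1) * x i + M))]
    calc (n - 1) ^ 2 * ∑ i, x i ^ 3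
        ≤ ∑ i, ((n - 1) * (n - 3) * M * x i ^ 2 + (2 * n - 3) * M ^ 2 * x i + M ^ 3) := by
          rw [mul_sum]; exact sum_le_sum fun i _ => hpt i
      _ = (n - 1) * (n - 3) * M * t + n * M ^ 3 := by
          simp only [sum_add_distrib, ← mul_sum, hx, sum_const, card_univ, nsmul_eq_mul, ← hn_def]
          ring
      _ = (n - 1) * (n - 2) * M * t := by linear_combination M * hM
  have hMs : M * √(n * (n - 1)) = (n - 1) * √t := by
    rw [← Real.sqrt_mul hMsq_nonneg, show (n - 1) * t / n * (n * (n - 1)) = (n - 1) ^ 2 * t by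
      field_simp, Real.sqrt_mul (sq_nonneg _), Real.sqrt_sq (by linarith)]
  have hs : 0 < √(n * (n - 1)) := Real.sqrt_pos.2 (by nlinarith)
  rw [okumuraConstant, ← hn_def, div_mul_eq_mul_div, le_div_iff₀ hs]
  refine le_of_mul_le_mul_left ?_ (by nlinarith : (0 : ℝ) < (n - 1) ^ 2)
  calc (n - 1) ^ 2 * ((∑ i, x i ^ 3) * √(n * (n - 1)))
      ≤ (n - 1) * (n - 2) * M * t * √(n * (n - 1)) := by
        rw [← mul_assoc]; exact mul_le_mul_of_nonneg_right hsum hs.le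
    _ = (n - 1) ^ 2 * ((n - 2) * (t * √t)) := by
        linear_combination (n - 1) * (n - 2) * t * hMs

theorem abs_sum_pow_three_le_of_sum_eq_zero (hn : 2 ≤ Fintype.card ι) {x : ι → ℝ}
    (hx : ∑ i, x i = 0) :
    |∑ i, x i ^ 3| ≤ okumuraConstant (Fintype.card ι) *
      ((∑ i, x i ^ 2) * √(∑ i, x i ^ 2)) := by
  have hneg := sum_pow_three_le_of_sum_eq_zero hn (x := -x) (by simp [hx])
  simp only [Pi.neg_apply, Odd.neg_pow (by decide : Odd 3), Even.neg_pow (by decide : Even 2),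
    sum_neg_distrib] at hneg
  exact abs_le.2 ⟨by linarith, sum_pow_three_le_of_sum_eq_zero hn hx⟩

theorem Matrix.IsSymm.abs_trace_mul_mul_le {T : Matrix ι ι ℝ} (hT : T.IsSymm)
    (htr : T.trace = 0) (hn : 2 ≤ Fintype.card ι) :
    |(T * T * T).trace| ≤ okumuraConstant (Fintype.card ι) *
      ((T * T).trace * √(T * T).trace) := by
  classical
  have hT' : T.IsHermitian := isHermitian_iff_isSymm.2 hT
  have htrace (k : ℕ) : (T ^ k).trace = ∑ i, hT'.eigenvalues i ^ k :=
    hT'.trace_pow_eq_sum_eigenvalues_pow k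
  rw [← pow_three', ← sq, htrace, htrace]
  refine abs_sum_pow_three_le_of_sum_eq_zero hn ?_
  simpa [htr] using (htrace 1).symm

end Okumura

/-- The key pointwise curvature estimate: with `H = trace h`, `T = h - (H/n)·I`,
`R_{ikjl} = c(δ_{ij}δ_{kl} - δ_{il}δ_{jk}) + h_{ij}h_{kl} - h_{il}h_{jk}` and
`Ric_{kl} = ∑_i R_{ikil}`, one has
`-∑ R_{ikjl} T_{ij} T_{kl} + ∑ Ric_{jk} T_{ij} T_{ik}
  ≥ ‖T‖²((1/n)H² - ‖T‖² - ((n-2)/√(n(n-1)))|H|‖T‖ + nc)`,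
where `‖T‖ = √(trace(T²))` is the Frobenius norm. -/
theorem gauss_curvature_estimate {n : ℕ} (hn : 2 ≤ n) (c : ℝ)
    (h : Matrix (Fin n) (Fin n) ℝ) (hsym : h.IsSymm)
    (H : ℝ) (hH : H = h.trace)
    (T : Matrix (Fin n) (Fin n) ℝ) (hT : T = h - (H / n) • (1 : Matrix (Fin n) (Fin n) ℝ))
    (R : Fin n → Fin n → Fin n → Fin n → ℝ)
    (hR : ∀ i k j l, R i k j l =
      c * ((if i = j then (1 : ℝ) else 0) * (if k = l then (1 : ℝ) else 0) -
           (if i = l then (1 : ℝ) else 0) * (if j = k then (1 : ℝ) else 0)) +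
      h i j * h k l - h i l * h j k)
    (Ric : Fin n → Fin n → ℝ) (hRic : ∀ k l, Ric k l = ∑ i, R i k i l) :
    -(∑ i, ∑ k, ∑ j, ∑ l, R i k j l * T i j * T k l) +
      (∑ i, ∑ j, ∑ k, Ric j k * T i j * T i k) ≥
    Matrix.trace (T * T) *
      ((1 / n) * H ^ 2 - Matrix.trace (T * T) -
        (((n : ℝ) - 2) / Real.sqrt ((n : ℝ) * ((n : ℝ) - 1))) * |H| *
          Real.sqrt (Matrix.trace (T * T)) + n * c) := by
  have hn0 : (n : ℝ) ≠ 0 := Nat.cast_ne_zero.2 (by omega)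
  have hh : h = T + (H / n) • 1 := by rw [hT, sub_add_cancel]
  have hTsymm : T.IsSymm := hT ▸ hsym.sub (isSymm_one.smul _)
  have htr : T.trace = 0 := by
    rw [hT, trace_sub, trace_smul, trace_one, Fintype.card_fin, ← hH, smul_eq_mul,
      div_mul_cancel₀ _ hn0, sub_self]
  have hgauss : ∀ i k j l, R i k j l = c * wedgeTensor 1 1 i k j l +
      wedgeTensor (T + (H / n) • 1) (T + (H / n) • 1) i k j l := by
    intro i k j l
    rw [hR, ← hh]
    simp only [wedgeTensor, one_apply]
    ring
  obtain rfl : Ric = fun k l => ∑ i, R i k i l := funext₂ hRic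
  rw [gauss_curvature_quadratic_form_eq c (H / n) hTsymm.eq htr R hgauss, Fintype.card_fin]
  have hok := hTsymm.abs_trace_mul_mul_le htr (by simpa using hn)
  rw [Fintype.card_fin] at hok
  have hcubic : -(|H| * (okumuraConstant n * ((T * T).trace * √(T * T).trace)))
      ≤ H * (T * T * T).trace :=
    calc _ ≤ -(|H| * |(T * T * T).trace|) :=
          neg_le_neg (mul_le_mul_of_nonneg_left hok (abs_nonneg H))
      _ = -|H * (T * T * T).trace| := by rw [abs_mul]
      _ ≤ _ := neg_abs_le _
  have hH2 : (n : ℝ) * (c + (H / n) ^ 2) = 1 / n * H ^ 2 + n * c := by field_simp; ring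
  rw [hH2, mul_div_cancel₀ H hn0]
  unfold okumuraConstant at hcubic
  linarith
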